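/- arXiv:2501.11173 — 8 statements merged into one kernel-verified Lean document; each statement's English description precedes it below -/
import Mathlib

section
/- Let C be a cap in (Z/2Z)^n with affinely independent subset B of size 8, and let x, y ∈ C \ B be distinct elements with x equal to the sum of elements of T_x ⊆ B and y equal to the sum of elements of T_y ⊆ B, where |T_x| = |T_y| = 7. Then a contradiction follows; i.e., at most one dependent element can be a sum of seven basis elements. -/
/-!
If `x` and `y` miss the points `a` and `b` of `B`, then over `ZMod 2` the sum of all of `B`
cancels in `x + y`, leaving `x + y = a + b`; so `{x, y, a, b}` is a quad in the cap unless
`x = y`.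
-/

/-- A cap: a subset of (Z/2Z)^n containing no quad (four distinct vectors summing to zero). -/
def IsCap {n : ℕ} (C : Set (Fin n → ZMod 2)) : Prop :=
  ∀ a ∈ C, ∀ b ∈ C, ∀ c ∈ C, ∀ d ∈ C,
    a ≠ b → a ≠ c → a ≠ d → b ≠ c → b ≠ d → c ≠ d → a + b + c + d ≠ 0

/-- Affine independence: no element is the sum of an odd number of other elements. -/
def AffIndep {n : ℕ} (B : Finset (Fin n → ZMod 2)) : Prop :=
  ∀ b ∈ B, ∀ T ⊆ B.erase b, Odd T.card → b ≠ ∑ v ∈ T, v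

theorem Finset.exists_eq_erase_of_subset {α : Type*} [DecidableEq α] {s t : Finset α}
    (hst : s ⊆ t) (hcard : s.card + 1 = t.card) : ∃ a ∈ t, s = t.erase a := by
  obtain ⟨a, has, rfl⟩ := Finset.exists_eq_insert_iff.2 ⟨hst, hcard⟩
  exact ⟨a, Finset.mem_insert_self a s, (Finset.erase_insert has).symm⟩

theorem ZModModule.sum_erase_add_sum_erase {ι V : Type*} [DecidableEq ι] [AddCommGroup V]
    [Module (ZMod 2) V] {s : Finset ι} (f : ι → V) {a b : ι} (ha : a ∈ s) (hb : b ∈ s) :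
    (∑ i ∈ s.erase a, f i) + ∑ i ∈ s.erase b, f i = f a + f b := by
  have sum_erase (c : ι) (hc : c ∈ s) : ∑ i ∈ s.erase c, f i = f c + ∑ i ∈ s, f i := by
    rw [← Finset.add_sum_erase s f hc, ← add_assoc, ZModModule.add_self, zero_add]
  rw [sum_erase a ha, sum_erase b hb, add_comm (f b), ZModModule.add_add_add_cancel]

theorem IsCap.eq_of_eq_sum_erase {n : ℕ} {C : Set (Fin n → ZMod 2)} (hC : IsCap C)
    {B : Finset (Fin n → ZMod 2)} (hBC : ↑B ⊆ C) {a b x y : Fin n → ZMod 2}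
    (ha : a ∈ B) (hb : b ∈ B) (hxC : x ∈ C) (hxB : x ∉ B) (hyC : y ∈ C) (hyB : y ∉ B)
    (hx : x = ∑ v ∈ B.erase a, v) (hy : y = ∑ v ∈ B.erase b, v) : x = y := by
  by_contra hxy
  have hab : a ≠ b := by
    rintro rfl
    exact hxy (hx.trans hy.symm)
  have hsum : x + y = a + b := by
    rw [hx, hy, ZModModule.sum_erase_add_sum_erase (fun v => v) ha hb]
  refine hC x hxC y hyC a (hBC ha) b (hBC hb) hxy (fun h => hxB (h ▸ ha))
    (fun h => hxB (h ▸ hb)) (fun h => hyB (h ▸ ha)) (fun h => hyB (h ▸ hb)) hab ?_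
  rw [add_assoc (x + y), hsum, ZModModule.add_self]

theorem at_most_one_seven_general {n : ℕ} (C : Set (Fin n → ZMod 2))
    (hC : IsCap C) (B Tx Ty : Finset (Fin n → ZMod 2)) (hBC : ↑B ⊆ C)
    (hBcard : B.card = 8)
    (x y : Fin n → ZMod 2) (hxC : x ∈ C) (hxB : x ∉ B)
    (hyC : y ∈ C) (hyB : y ∉ B) (hxy : x ≠ y)
    (hTx : Tx ⊆ B) (hTy : Ty ⊆ B)
    (hx : x = ∑ v ∈ Tx, v) (hy : y = ∑ v ∈ Ty, v)
    (hcx : Tx.card = 7) (hcy : Ty.card = 7) :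
    False := by
  obtain ⟨a, ha, rfl⟩ := Finset.exists_eq_erase_of_subset hTx (by rw [hcx, hBcard])
  obtain ⟨b, hb, rfl⟩ := Finset.exists_eq_erase_of_subset hTy (by rw [hcy, hBcard])
  exact hxy (hC.eq_of_eq_sum_erase hBC ha hb hxC hxB hyC hyB hx hy)

theorem at_most_one_seven {n : ℕ} (C : Set (Fin n → ZMod 2))
    (hC : IsCap C) (B Tx Ty : Finset (Fin n → ZMod 2)) (hBC : ↑B ⊆ C)
    (hB : AffIndep B) (hBcard : B.card = 8)
    (x y : Fin n → ZMod 2) (hxC : x ∈ C) (hxB : x ∉ B)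
    (hyC : y ∈ C) (hyB : y ∉ B) (hxy : x ≠ y)
    (hTx : Tx ⊆ B) (hTy : Ty ⊆ B)
    (hx : x = ∑ v ∈ Tx, v) (hy : y = ∑ v ∈ Ty, v)
    (hcx : Tx.card = 7) (hcy : Ty.card = 7) :
    False :=
  at_most_one_seven_general C hC B Tx Ty hBC hBcard x y hxC hxB hyC hyB hxy hTx hTy hx hy hcx hcy
end

section
/- Let C be a cap in (Z/2Z)^n, B ⊆ C an affinely independent subset of size 8, and x₁, x₂ ∈ C \ B distinct with x₁ = Σ T₁ and x₂ = Σ T₂ where T₁, T₂ ⊆ B satisfy |T₁| = |T₂| = 5. Then |T₁ ∩ T₂| = 2 or |T₁ ∩ T₂| = 3. -/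
open Finset

theorem Finset.sum_add_sum_sdiff_comm {α M : Type*} [DecidableEq α] [AddCommMonoid M]
    (s t : Finset α) (f : α → M) :
    ∑ x ∈ s, f x + ∑ x ∈ t \ s, f x = ∑ x ∈ t, f x + ∑ x ∈ s \ t, f x := by
  rw [← sum_union disjoint_sdiff, ← sum_union disjoint_sdiff, union_sdiff_self_eq_union,
    union_sdiff_self_eq_union, union_comm]

section Cap

variable {n : ℕ} {C : Set (Fin n → ZMod 2)}

theorem IsCap.add_ne_add (hC : IsCap C) {a b c d : Fin n → ZMod 2}
    (ha : a ∈ C) (hb : b ∈ C) (hc : c ∈ C) (hd : d ∈ C) (hab : a ≠ b) (hac : a ≠ c)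
    (had : a ≠ d) (hbc : b ≠ c) (hbd : b ≠ d) (hcd : c ≠ d) : a + b ≠ c + d := by
  intro h
  refine hC a ha b hb c hc d hd hab hac had hbc hbd hcd ?_
  rw [add_assoc (a + b), h]
  funext i
  exact CharTwo.add_self_eq_zero ((c + d) i)

theorem IsCap.card_sdiff_ne_one (hC : IsCap C)
    {B T₁ T₂ : Finset (Fin n → ZMod 2)} (hBC : ↑B ⊆ C) (hT₁ : T₁ ⊆ B) (hT₂ : T₂ ⊆ B)
    {x₁ x₂ : Fin n → ZMod 2} (hx₁C : x₁ ∈ C) (hx₁B : x₁ ∉ B) (hx₂C : x₂ ∈ C) (hx₂B : x₂ ∉ B)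
    (hs₁ : x₁ = ∑ v ∈ T₁, v) (hs₂ : x₂ = ∑ v ∈ T₂, v) (h₂₁ : #(T₂ \ T₁) = 1) :
    #(T₁ \ T₂) ≠ 1 := by
  intro h₁₂
  obtain ⟨a, ha⟩ := card_eq_one.mp h₁₂
  obtain ⟨b, hb⟩ := card_eq_one.mp h₂₁
  have haT : a ∈ T₁ \ T₂ := ha ▸ mem_singleton_self a
  have hbT : b ∈ T₂ \ T₁ := hb ▸ mem_singleton_self b
  have haB : a ∈ B := hT₁ (mem_sdiff.mp haT).1
  have hbB : b ∈ B := hT₂ (mem_sdiff.mp hbT).1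
  have hab : a ≠ b := fun h => (mem_sdiff.mp hbT).2 (h ▸ (mem_sdiff.mp haT).1)
  have hswap : x₁ + b = x₂ + a := by
    simpa [hs₁, hs₂, ha, hb] using sum_add_sum_sdiff_comm T₁ T₂ id
  have hx : x₁ ≠ x₂ := fun h => hab (add_left_cancel (h ▸ hswap)).symm
  refine hC.add_ne_add hx₁C (hBC hbB) hx₂C (hBC haB) (ne_of_mem_of_not_mem hbB hx₁B).symm hx
    (ne_of_mem_of_not_mem haB hx₁B).symm (ne_of_mem_of_not_mem hbB hx₂B) hab.symm
    (ne_of_mem_of_not_mem haB hx₂B).symm hswap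

end Cap

theorem five_five_inter_two_or_three_general {n : ℕ} (C : Set (Fin n → ZMod 2))
    (hC : IsCap C) (B T₁ T₂ : Finset (Fin n → ZMod 2)) (hBC : ↑B ⊆ C)
    (hBcard : B.card = 8)
    (x₁ x₂ : Fin n → ZMod 2) (hx₁C : x₁ ∈ C) (hx₁B : x₁ ∉ B)
    (hx₂C : x₂ ∈ C) (hx₂B : x₂ ∉ B) (hne : x₁ ≠ x₂)
    (hT₁ : T₁ ⊆ B) (hT₂ : T₂ ⊆ B)
    (hs₁ : x₁ = ∑ v ∈ T₁, v) (hs₂ : x₂ = ∑ v ∈ T₂, v)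
    (hc₁ : T₁.card = 5) (hc₂ : T₂.card = 5) :
    (T₁ ∩ T₂).card = 2 ∨ (T₁ ∩ T₂).card = 3 := by
  have hunion : #(T₁ ∪ T₂) ≤ 8 := hBcard ▸ card_le_card (union_subset hT₁ hT₂)
  have hunion_inter := card_union_add_card_inter T₁ T₂
  have hsdiff₁ := card_sdiff_add_card_inter T₁ T₂
  have hsdiff₂ := card_sdiff_add_card_inter T₂ T₁
  rw [inter_comm] at hsdiff₂
  have hsdiff_ne_zero : #(T₁ \ T₂) ≠ 0 := by
    intro h
    have hsub : T₁ ⊆ T₂ := sdiff_eq_empty_iff_subset.mp (card_eq_zero.mp h)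
    exact hne (by rw [hs₁, hs₂, eq_of_subset_of_card_le hsub (by omega)])
  have hsdiff_ne_one := hC.card_sdiff_ne_one hBC hT₁ hT₂ hx₁C hx₁B hx₂C hx₂B hs₁ hs₂
  omega

theorem five_five_inter_two_or_three {n : ℕ} (C : Set (Fin n → ZMod 2))
    (hC : IsCap C) (B T₁ T₂ : Finset (Fin n → ZMod 2)) (hBC : ↑B ⊆ C)
    (hB : AffIndep B) (hBcard : B.card = 8)
    (x₁ x₂ : Fin n → ZMod 2) (hx₁C : x₁ ∈ C) (hx₁B : x₁ ∉ B)
    (hx₂C : x₂ ∈ C) (hx₂B : x₂ ∉ B) (hne : x₁ ≠ x₂)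
    (hT₁ : T₁ ⊆ B) (hT₂ : T₂ ⊆ B)
    (hs₁ : x₁ = ∑ v ∈ T₁, v) (hs₂ : x₂ = ∑ v ∈ T₂, v)
    (hc₁ : T₁.card = 5) (hc₂ : T₂.card = 5) :
    (T₁ ∩ T₂).card = 2 ∨ (T₁ ∩ T₂).card = 3 :=
  five_five_inter_two_or_three_general C hC B T₁ T₂ hBC hBcard x₁ x₂ hx₁C hx₁B hx₂C hx₂B hne hT₁ hT₂
    hs₁ hs₂ hc₁ hc₂
end

section
/- Let C be a cap in (Z/2Z)^n, B ⊆ C an affinely independent subset of size 8, and x₁, x₂ ∈ C \ B distinct with x₁ = Σ T₁ and x₂ = Σ T₂ where T₁, T₂ ⊆ B satisfy |T₁| = 7 and |T₂| = 5. Then |T₁ ∩ T₂| = 4. -/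
open Finset

lemma Finset.card_inter_eq_four_or_subset {α : Type*} [DecidableEq α] {B S T : Finset α}
    (hS : S ⊆ B) (hT : T ⊆ B) (hB : #B = 8) (hS7 : #S = 7) (hT5 : #T = 5) :
    #(S ∩ T) = 4 ∨ T ⊆ S := by
  have hunion : #(S ∪ T) ≤ 8 := hB ▸ card_le_card (union_subset hS hT)
  have hinter : #(S ∩ T) ≤ 5 := hT5 ▸ card_le_card inter_subset_right
  have := card_union_add_card_inter S T
  by_cases h5 : #(S ∩ T) = 5
  · exact .inr (inter_eq_right.mp (eq_of_subset_of_card_le inter_subset_right (by omega)))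
  · exact .inl (by omega)

lemma Finset.sum_eq_sum_add_add_of_sdiff_eq_pair {M : Type*} [AddCommMonoid M] [DecidableEq M]
    {S T : Finset M} {a b : M} (hTS : T ⊆ S) (hab : a ≠ b) (hST : S \ T = {a, b}) :
    ∑ v ∈ S, v = ∑ v ∈ T, v + a + b := by
  rw [← sum_sdiff hTS, hST, sum_pair hab]
  abel

theorem IsCap.add_add_notMem {n : ℕ} {C : Set (Fin n → ZMod 2)} (hC : IsCap C)
    {x a b : Fin n → ZMod 2} (hx : x ∈ C) (ha : a ∈ C) (hb : b ∈ C) (hab : a ≠ b)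
    (hxa : x ≠ a) (hxb : x ≠ b) (hya : x + a + b ≠ a) (hyb : x + a + b ≠ b) :
    x + a + b ∉ C := by
  intro hy
  have hxy : x ≠ x + a + b := by
    rw [add_assoc, ne_eq, left_eq_add, ← ZModModule.sub_eq_add, sub_eq_zero]
    exact hab
  -- in characteristic two `+` may be read as `-`, turning this into an identity of abelian groups
  have hquad : x + (x + a + b) + a + b = 0 := by
    simp only [← ZModModule.sub_eq_add]
    abel
  exact hC x hx _ hy a ha b hb hxy hxa hxb hya hyb hab hquad

theorem IsCap.sum_notMem_of_card_sdiff_eq_two {n : ℕ} {C : Set (Fin n → ZMod 2)}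
    (hC : IsCap C) {B S T : Finset (Fin n → ZMod 2)} (hBC : ↑B ⊆ C) (hSB : S ⊆ B) (hTS : T ⊆ S)
    (hST : #(S \ T) = 2) (hTC : ∑ v ∈ T, v ∈ C) (hTB : ∑ v ∈ T, v ∉ B)
    (hS : ∑ v ∈ S, v ∉ B) : ∑ v ∈ S, v ∉ C := by
  obtain ⟨a, b, hab, hpair⟩ := card_eq_two.mp hST
  have hmem : a ∈ B ∧ b ∈ B := by
    have : S \ T ⊆ B := sdiff_subset.trans hSB
    simpa [hpair, insert_subset_iff] using this
  have hsum := sum_eq_sum_add_add_of_sdiff_eq_pair hTS hab hpair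
  rw [hsum] at hS ⊢
  exact hC.add_add_notMem hTC (hBC hmem.1) (hBC hmem.2) hab
    (ne_of_mem_of_not_mem hmem.1 hTB).symm (ne_of_mem_of_not_mem hmem.2 hTB).symm
    (ne_of_mem_of_not_mem hmem.1 hS).symm (ne_of_mem_of_not_mem hmem.2 hS).symm

theorem seven_five_inter_four_general {n : ℕ} (C : Set (Fin n → ZMod 2))
    (hC : IsCap C) (B T₁ T₂ : Finset (Fin n → ZMod 2)) (hBC : ↑B ⊆ C)
    (hBcard : B.card = 8)
    (x₁ x₂ : Fin n → ZMod 2) (hx₁C : x₁ ∈ C) (hx₁B : x₁ ∉ B)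
    (hx₂C : x₂ ∈ C) (hx₂B : x₂ ∉ B)
    (hT₁ : T₁ ⊆ B) (hT₂ : T₂ ⊆ B)
    (hs₁ : x₁ = ∑ v ∈ T₁, v) (hs₂ : x₂ = ∑ v ∈ T₂, v)
    (hc₁ : T₁.card = 7) (hc₂ : T₂.card = 5) :
    (T₁ ∩ T₂).card = 4 := by
  refine (card_inter_eq_four_or_subset hT₁ hT₂ hBcard hc₁ hc₂).resolve_right fun hsub ↦ ?_
  have hdiff : #(T₁ \ T₂) = 2 := by rw [card_sdiff_of_subset hsub]; omega
  subst hs₁ hs₂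
  exact hC.sum_notMem_of_card_sdiff_eq_two hBC hT₁ hsub hdiff hx₂C hx₂B hx₁B hx₁C

theorem seven_five_inter_four {n : ℕ} (C : Set (Fin n → ZMod 2))
    (hC : IsCap C) (B T₁ T₂ : Finset (Fin n → ZMod 2)) (hBC : ↑B ⊆ C)
    (hB : AffIndep B) (hBcard : B.card = 8)
    (x₁ x₂ : Fin n → ZMod 2) (hx₁C : x₁ ∈ C) (hx₁B : x₁ ∉ B)
    (hx₂C : x₂ ∈ C) (hx₂B : x₂ ∉ B) (hne : x₁ ≠ x₂)
    (hT₁ : T₁ ⊆ B) (hT₂ : T₂ ⊆ B)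
    (hs₁ : x₁ = ∑ v ∈ T₁, v) (hs₂ : x₂ = ∑ v ∈ T₂, v)
    (hc₁ : T₁.card = 7) (hc₂ : T₂.card = 5) :
    (T₁ ∩ T₂).card = 4 :=
  seven_five_inter_four_general C hC B T₁ T₂ hBC hBcard x₁ x₂ hx₁C hx₁B hx₂C hx₂B hT₁ hT₂ hs₁ hs₂
    hc₁ hc₂
end

section
/- Let B = {a₁, ..., a₈} be an affinely independent set in (Z/2Z)^n, and let x₁ = a₁+a₂+a₃+a₄+a₅ and x₂ = a₄+a₅+a₆+a₇+a₈. Then C = B ∪ {x₁, x₂} is a cap of size 10. -/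
open Finset Function

section AffIndep

variable {ι : Type*} [Fintype ι] [DecidableEq ι] {n : ℕ} {a : ι → Fin n → ZMod 2}

theorem AffIndep.sum_ne_zero (ha : Injective a) (hB : AffIndep (univ.image a))
    {D : Finset ι} (hD : D.Nonempty) (hev : Even D.card) : ∑ i ∈ D, a i ≠ 0 := by
  obtain ⟨b, hb⟩ := hD
  have hsub : (D.erase b).image a ⊆ (univ.image a).erase (a b) := by
    simp only [subset_iff, mem_image, mem_erase, mem_univ, true_and]
    rintro _ ⟨i, ⟨hib, -⟩, rfl⟩
    exact ⟨fun h => hib (ha h), i, rfl⟩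
  have hodd : Odd ((D.erase b).image a).card := by
    rw [card_image_of_injective _ ha, card_erase_of_mem hb]
    exact Nat.Even.sub_odd (card_pos.2 ⟨b, hb⟩) hev odd_one
  intro h0
  refine hB (a b) (mem_image_of_mem a (mem_univ b)) _ hsub hodd ?_
  rw [sum_image ha.injOn, ← add_right_cancel_iff (a := a b), ZModModule.add_self, add_comm,
    add_sum_erase D a hb, h0]

theorem AffIndep.linearCombination_ne_zero (ha : Injective a) (hB : AffIndep (univ.image a))
    {c : ι → ZMod 2} (hc : c ≠ 0) (hsum : ∑ i, c i = 0) :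
    Fintype.linearCombination (ZMod 2) a c ≠ 0 := by
  set D := univ.filter (c · ≠ 0)
  have hcD : c = fun i => if i ∈ D then 1 else 0 := by
    funext i
    by_cases hi : c i = 0
    · simp [D, hi]
    · simpa [D, hi] using (show ∀ x : ZMod 2, x ≠ 0 → x = 1 by decide) _ hi
  have hD : D.Nonempty := by
    obtain ⟨i, hi⟩ := Function.ne_iff.1 hc
    exact ⟨i, by simpa [D] using hi⟩
  have hev : Even D.card := by
    rw [hcD, sum_boole] at hsum
    simpa [ZMod.natCast_eq_zero_iff_even] using hsum
  rw [Fintype.linearCombination_apply, hcD]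
  simpa [ite_smul, sum_ite_mem] using hB.sum_ne_zero ha hD hev

end AffIndep

section Image

variable {m n : ℕ} {C : Set (Fin m → ZMod 2)} (φ : (Fin m → ZMod 2) →ₗ[ZMod 2] (Fin n → ZMod 2))

theorem LinearMap.injOn_of_ker_evenWeight (hodd : ∀ v ∈ C, ∑ i, v i = 1)
    (hφ : ∀ c, ∑ i, c i = 0 → φ c = 0 → c = 0) : Set.InjOn φ C := by
  intro u hu v hv h
  refine sub_eq_zero.1 (hφ _ ?_ (by rw [map_sub, h, sub_self]))
  simp only [Pi.sub_apply, sum_sub_distrib, hodd u hu, hodd v hv, sub_self]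

theorem IsCap.image_of_ker_evenWeight (hC : IsCap C) (hodd : ∀ v ∈ C, ∑ i, v i = 1)
    (hφ : ∀ c, ∑ i, c i = 0 → φ c = 0 → c = 0) : IsCap (φ '' C) := by
  rintro _ ⟨u, hu, rfl⟩ _ ⟨v, hv, rfl⟩ _ ⟨w, hw, rfl⟩ _ ⟨x, hx, rfl⟩ huv huw hux hvw hvx hwx h0
  refine hC u hu v hv w hw x hx (ne_of_apply_ne φ huv) (ne_of_apply_ne φ huw)
    (ne_of_apply_ne φ hux) (ne_of_apply_ne φ hvw) (ne_of_apply_ne φ hvx) (ne_of_apply_ne φ hwx)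
    (hφ _ ?_ (by simpa only [map_add] using h0))
  simp only [Pi.add_apply, sum_add_distrib, hodd u hu, hodd v hv, hodd w hw, hodd x hx]
  decide

end Image

/-- Coefficients of `a 0, …, a 7, x₁, x₂` with respect to the family `a`. -/
def capVec : Fin 10 → Fin 8 → ZMod 2 :=
  ![![1, 0, 0, 0, 0, 0, 0, 0], ![0, 1, 0, 0, 0, 0, 0, 0], ![0, 0, 1, 0, 0, 0, 0, 0],
    ![0, 0, 0, 1, 0, 0, 0, 0], ![0, 0, 0, 0, 1, 0, 0, 0], ![0, 0, 0, 0, 0, 1, 0, 0],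
    ![0, 0, 0, 0, 0, 0, 1, 0], ![0, 0, 0, 0, 0, 0, 0, 1],
    ![1, 1, 1, 1, 1, 0, 0, 0], ![0, 0, 0, 1, 1, 1, 1, 1]]

theorem capVec_injective : Injective capVec := by decide

theorem sum_capVec (i : Fin 10) : ∑ j, capVec i j = 1 := by revert i; decide

theorem isCap_range_capVec : IsCap (Set.range capVec) := by
  have hquad : ∀ i j k l, i ≠ j → i ≠ k → i ≠ l → j ≠ k → j ≠ l → k ≠ l →
      capVec i + capVec j + capVec k + capVec l ≠ 0 := by
    decide +kernel
  rintro _ ⟨i, rfl⟩ _ ⟨j, rfl⟩ _ ⟨k, rfl⟩ _ ⟨l, rfl⟩ hij hik hil hjk hjl hkl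
  exact hquad i j k l (ne_of_apply_ne _ hij) (ne_of_apply_ne _ hik) (ne_of_apply_ne _ hil)
    (ne_of_apply_ne _ hjk) (ne_of_apply_ne _ hjl) (ne_of_apply_ne _ hkl)

theorem cap10_552 {n : ℕ} (a : Fin 8 → (Fin n → ZMod 2))
    (ha : Function.Injective a)
    (hB : AffIndep (Finset.image a Finset.univ)) :
    IsCap (↑(Finset.image a Finset.univ ∪
        {a 0 + a 1 + a 2 + a 3 + a 4, a 3 + a 4 + a 5 + a 6 + a 7}) :
      Set (Fin n → ZMod 2)) ∧
    (Finset.image a Finset.univ ∪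
        {a 0 + a 1 + a 2 + a 3 + a 4, a 3 + a 4 + a 5 + a 6 + a 7}).card = 10 := by
  set φ := Fintype.linearCombination (ZMod 2) a
  have hφ : ∀ c, ∑ i, c i = 0 → φ c = 0 → c = 0 := fun c hsum h0 =>
    by_contra fun hc => hB.linearCombination_ne_zero ha hc hsum h0
  have hodd : ∀ v ∈ Set.range capVec, ∑ i, v i = 1 := Set.forall_mem_range.2 sum_capVec
  have himage : univ.image a ∪ {a 0 + a 1 + a 2 + a 3 + a 4, a 3 + a 4 + a 5 + a 6 + a 7} =
      univ.image (φ ∘ capVec) := by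
    ext y
    simp only [union_insert, union_singleton, mem_insert, mem_image, mem_univ, true_and,
      Fin.exists_fin_succ, Fin.succ_zero_eq_one, Fin.succ_one_eq_two, Fin.reduceSucc,
      IsEmpty.exists_iff, or_false, capVec, comp_apply, Fintype.linearCombination_apply,
      Matrix.cons_val', Matrix.cons_val_fin_one, Fin.sum_univ_eight, Matrix.cons_val_zero,
      Matrix.cons_val_one, Matrix.cons_val, one_smul, zero_smul, add_zero, Matrix.cons_val_succ,
      zero_add, exists_const, φ]
    grind
  rw [himage, coe_image, coe_univ, Set.image_univ, Set.range_comp,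
    card_image_of_injective _ ((φ.injOn_of_ker_evenWeight hodd hφ).injective_iff _
      subset_rfl |>.2 capVec_injective)]
  exact ⟨isCap_range_capVec.image_of_ker_evenWeight φ hodd hφ, rfl⟩
end

section
/- Let B = {a₁, ..., a₈} be an affinely independent set in (Z/2Z)^n, and let x₁ = a₁+a₂+a₃+a₄+a₅ and x₂ = a₃+a₄+a₅+a₆+a₇. Then C = B ∪ {x₁, x₂} is a cap of size 10. -/
/-!
Affine independence of `a₀, …, a₇` says precisely that no nonzero coefficient vector
`c ∈ (ZMod 2)⁸` of even weight has `∑ cᵢ • aᵢ = 0`. Every point of `C` is `∑ cᵢ • aᵢ` for a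
coefficient vector `c` of odd weight, and a sum of four odd-weight vectors has even weight, so
four points of `C` form a quad only if their coefficient vectors do. The ten coefficient vectors
form a cap in `(ZMod 2)⁸`, which is a finite check.
-/

open Finset

variable {n : ℕ} {ι : Type*} [Fintype ι]

theorem AffIndep.eq_zero_of_linearCombination_eq_zero {a : ι → Fin n → ZMod 2}
    (hB : AffIndep (univ.image a)) (ha : Function.Injective a) {c : ι → ZMod 2}
    (hc : ∑ i, c i = 0) (hac : Fintype.linearCombination (ZMod 2) a c = 0) : c = 0 := by
  classical
  funext i₀
  by_contra hi₀
  set S := univ.filter (c · ≠ 0)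
  have hcS : c = fun i => if i ∈ S then 1 else 0 := by
    funext i
    simp only [S, mem_filter, mem_univ, true_and]
    generalize c i = x
    revert x
    decide
  have hi₀S : i₀ ∈ S := by simpa [S] using hi₀
  have hS_even : Even #S := by
    rw [hcS, sum_boole, filter_mem_eq_inter, univ_inter] at hc
    exact (ZMod.natCast_eq_zero_iff_even).1 hc
  have hS_sum : a i₀ + ∑ i ∈ S.erase i₀, a i = 0 := by
    rw [add_sum_erase _ _ hi₀S, ← hac, hcS, Fintype.linearCombination_apply]
    simp [ite_smul, sum_ite_mem]
  refine hB (a i₀) (mem_image_of_mem a (mem_univ _)) ((S.erase i₀).image a) ?_ ?_ ?_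
  · intro x hx
    obtain ⟨j, hj, rfl⟩ := mem_image.1 hx
    exact mem_erase.2 ⟨ha.ne (ne_of_mem_erase hj), mem_image_of_mem a (mem_univ j)⟩
  · rw [card_image_of_injective _ ha, card_erase_of_mem hi₀S]
    exact Nat.Even.sub_odd (card_pos.2 ⟨i₀, hi₀S⟩) hS_even odd_one
  · rw [sum_image fun x _ y _ h => ha h]
    exact funext fun j => CharTwo.add_eq_zero.1 (congrFun hS_sum j)

theorem AffIndep.injOn_linearCombination {a : ι → Fin n → ZMod 2}
    (hB : AffIndep (univ.image a)) (ha : Function.Injective a) :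
    Set.InjOn (Fintype.linearCombination (ZMod 2) a) {c | ∑ i, c i = 1} := by
  intro c hc d hd h
  refine sub_eq_zero.1 (hB.eq_zero_of_linearCombination_eq_zero ha ?_ ?_)
  · simp_all [sum_sub_distrib]
  · rw [map_sub, h, sub_self]

theorem AffIndep.isCap_image_linearCombination {m : ℕ} {a : Fin m → Fin n → ZMod 2}
    (hB : AffIndep (univ.image a)) (ha : Function.Injective a) {C : Set (Fin m → ZMod 2)}
    (hC : IsCap C) (hC_odd : ∀ c ∈ C, ∑ i, c i = 1) :
    IsCap (Fintype.linearCombination (ZMod 2) a '' C) := by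
  rintro _ ⟨c₁, h₁, rfl⟩ _ ⟨c₂, h₂, rfl⟩ _ ⟨c₃, h₃, rfl⟩ _ ⟨c₄, h₄, rfl⟩ h₁₂ h₁₃ h₁₄ h₂₃ h₂₄ h₃₄ hsum
  refine hC c₁ h₁ c₂ h₂ c₃ h₃ c₄ h₄ (ne_of_apply_ne _ h₁₂) (ne_of_apply_ne _ h₁₃)
    (ne_of_apply_ne _ h₁₄) (ne_of_apply_ne _ h₂₃) (ne_of_apply_ne _ h₂₄) (ne_of_apply_ne _ h₃₄)
    (hB.eq_zero_of_linearCombination_eq_zero ha ?_ (by simpa only [map_add] using hsum))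
  simp only [Pi.add_apply, sum_add_distrib, hC_odd _ h₁, hC_odd _ h₂, hC_odd _ h₃, hC_odd _ h₄]
  decide

def capCoeffs : Fin 10 → Fin 8 → ZMod 2 :=
  ![Pi.single 0 1, Pi.single 1 1, Pi.single 2 1, Pi.single 3 1, Pi.single 4 1, Pi.single 5 1,
    Pi.single 6 1, Pi.single 7 1, ![1, 1, 1, 1, 1, 0, 0, 0], ![0, 0, 1, 1, 1, 1, 1, 0]]

set_option maxRecDepth 100000 in
lemma isCap_range_capCoeffs : IsCap (Set.range capCoeffs) := by
  simp only [IsCap, Set.forall_mem_range]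
  decide

lemma capCoeffs_injective : Function.Injective capCoeffs := by decide

lemma sum_capCoeffs (k : Fin 10) : ∑ i, capCoeffs k i = 1 := by revert k; decide

lemma image_linearCombination_capCoeffs (a : Fin 8 → Fin n → ZMod 2) :
    univ.image (fun k => Fintype.linearCombination (ZMod 2) a (capCoeffs k)) =
      univ.image a ∪ {a 0 + a 1 + a 2 + a 3 + a 4, a 2 + a 3 + a 4 + a 5 + a 6} := by
  ext x
  simp only [mem_image, mem_univ, true_and, mem_union, mem_insert, mem_singleton,
    Fin.exists_fin_succ]
  simp only [capCoeffs, Fin.isValue, Matrix.cons_val_zero, Fintype.linearCombination_apply,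
    Fintype.sum_single_smul, one_smul, eq_comm, Fin.succ_zero_eq_one, Matrix.cons_val_one,
    Fin.succ_one_eq_two, Matrix.cons_val, Fin.reduceSucc, Fin.sum_univ_eight, zero_smul, add_zero,
    zero_add, Matrix.cons_val_succ, Matrix.cons_val_fin_one, IsEmpty.exists_iff, or_false]
  tauto

theorem cap10_553 {n : ℕ} (a : Fin 8 → (Fin n → ZMod 2))
    (ha : Function.Injective a)
    (hB : AffIndep (Finset.image a Finset.univ)) :
    IsCap (↑(Finset.image a Finset.univ ∪
        {a 0 + a 1 + a 2 + a 3 + a 4, a 2 + a 3 + a 4 + a 5 + a 6}) :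
      Set (Fin n → ZMod 2)) ∧
    (Finset.image a Finset.univ ∪
        {a 0 + a 1 + a 2 + a 3 + a 4, a 2 + a 3 + a 4 + a 5 + a 6}).card = 10 := by
  rw [← image_linearCombination_capCoeffs, coe_image, coe_univ, Set.image_univ]
  constructor
  · rw [Set.range_comp']
    exact hB.isCap_image_linearCombination ha isCap_range_capCoeffs
      (Set.forall_mem_range.2 sum_capCoeffs)
  · rw [card_image_of_injective _ fun k l h => capCoeffs_injective
      (hB.injOn_linearCombination ha (sum_capCoeffs k) (sum_capCoeffs l) h), card_univ,
      Fintype.card_fin]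
end

section
/- Let B = {a₁, ..., a₈} be an affinely independent set in (Z/2Z)^n. The cap C = B ∪ {a₁+a₂+a₃+a₄+a₅, a₄+a₅+a₆+a₇+a₈} is not affinely equivalent to the cap C' = B ∪ {a₁+a₂+a₃+a₄+a₅, a₃+a₄+a₅+a₆+a₇}. -/
/-- Affine equivalence of subsets of (Z/2Z)^n: an invertible affine map sends one onto the other. -/
def AffEquiv {n : ℕ} (S S' : Set (Fin n → ZMod 2)) : Prop :=
  ∃ (L : (Fin n → ZMod 2) ≃ₗ[ZMod 2] (Fin n → ZMod 2)) (b : Fin n → ZMod 2),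
    (fun x => L x + b) '' S = S'

open Finset
open scoped symmDiff

section SymmDiff

variable {ι M : Type*} [DecidableEq ι] [AddCommGroup M] [Module (ZMod 2) M]

lemma ZModModule.sum_symmDiff (f : ι → M) (s t : Finset ι) :
    ∑ i ∈ s ∆ t, f i = ∑ i ∈ s, f i + ∑ i ∈ t, f i := by
  have hsplit : ∑ i ∈ s ∆ t, f i + ∑ i ∈ s ∩ t, f i = ∑ i ∈ s ∪ t, f i := by
    rw [symmDiff_eq_sup_sdiff_inf]
    exact sum_sdiff inter_subset_union
  rw [← sum_union_inter, ← hsplit, add_assoc, ZModModule.add_self, add_zero]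

lemma even_card_symmDiff_iff (s t : Finset ι) :
    Even (s ∆ t).card ↔ Even (s.card + t.card) := by
  have h := ZModModule.sum_symmDiff (fun _ => (1 : ZMod 2)) s t
  simp only [sum_const, nsmul_eq_mul, mul_one] at h
  rw [← ZMod.natCast_eq_zero_iff_even, ← ZMod.natCast_eq_zero_iff_even, h, Nat.cast_add]

/-- The indices lying in an odd number of members of `𝒮`. -/
def foldSymmDiff (𝒮 : Finset (Finset ι)) : Finset ι :=
  𝒮.fold (fun s t => s ∆ t) ∅ id

lemma ZModModule.sum_sum_eq_sum_foldSymmDiff (f : ι → M) (𝒮 : Finset (Finset ι)) :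
    ∑ s ∈ 𝒮, ∑ i ∈ s, f i = ∑ i ∈ foldSymmDiff 𝒮, f i := by
  induction 𝒮 using Finset.induction_on with
  | empty => simp [foldSymmDiff]
  | insert s 𝒮 hs ih =>
    rw [sum_insert hs, foldSymmDiff, fold_insert hs, ← foldSymmDiff, ih, id,
      ZModModule.sum_symmDiff]

end SymmDiff

section AffIndep

variable {n : ℕ} {ι : Type*} [Fintype ι] [DecidableEq ι] {a : ι → Fin n → ZMod 2}

lemma AffIndep.eq_empty_of_sum_eq_zero (hB : AffIndep (univ.image a)) (ha : a.Injective)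
    {u : Finset ι} (hu : Even u.card) (h0 : ∑ i ∈ u, a i = 0) : u = ∅ := by
  by_contra hne
  obtain ⟨i, hi⟩ := nonempty_iff_ne_empty.mpr hne
  have hsub : (u.erase i).image a ⊆ (univ.image a).erase (a i) := by
    simp only [subset_iff, mem_image, mem_erase, mem_univ, true_and]
    rintro _ ⟨j, ⟨hji, -⟩, rfl⟩
    exact ⟨ha.ne hji, j, rfl⟩
  have hodd : Odd ((u.erase i).image a).card := by
    rw [card_image_of_injective _ ha, card_erase_of_mem hi]
    exact Nat.Even.sub_odd (card_pos.mpr ⟨i, hi⟩) hu odd_one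
  have hsum : a i = ∑ v ∈ (u.erase i).image a, v := by
    rw [sum_image ha.injOn, ← ZModModule.neg_eq_self (∑ j ∈ u.erase i, a j)]
    exact eq_neg_of_add_eq_zero_left ((add_sum_erase u a hi).trans h0)
  exact hB (a i) (mem_image_of_mem a (mem_univ i)) _ hsub hodd hsum

lemma AffIndep.eq_of_sum_eq (hB : AffIndep (univ.image a)) (ha : a.Injective)
    {s t : Finset ι} (hst : Even (s.card + t.card)) (h : ∑ i ∈ s, a i = ∑ i ∈ t, a i) :
    s = t := by
  have h0 : ∑ i ∈ s ∆ t, a i = 0 := by rw [ZModModule.sum_symmDiff, h, ZModModule.add_self]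
  have hempty := hB.eq_empty_of_sum_eq_zero ha ((even_card_symmDiff_iff s t).mpr hst) h0
  rwa [← bot_eq_empty, symmDiff_eq_bot] at hempty

lemma AffIndep.injOn_sum_of_odd (hB : AffIndep (univ.image a)) (ha : a.Injective) :
    Set.InjOn (fun s => ∑ i ∈ s, a i) {s | Odd s.card} :=
  fun _ hs _ ht h => hB.eq_of_sum_eq ha (Odd.add_odd hs ht) h

end AffIndep

section PairSum

def TotalIsPairSum {V : Type*} [AddCommMonoid V] (S : Finset V) : Prop :=
  ∃ x ∈ S, ∃ y ∈ S, x ≠ y ∧ x + y = ∑ z ∈ S, z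

variable {V : Type*} [AddCommGroup V] [Module (ZMod 2) V] [DecidableEq V]

lemma TotalIsPairSum.image_affine {S : Finset V} (hS : Even S.card) (L : V ≃ₗ[ZMod 2] V)
    (b : V) (h : TotalIsPairSum S) : TotalIsPairSum (S.image fun x => L x + b) := by
  obtain ⟨x, hx, y, hy, hxy, hsum⟩ := h
  have hinj : Function.Injective fun x => L x + b := fun _ _ h => L.injective (add_right_cancel h)
  obtain ⟨k, hk⟩ := hS
  refine ⟨L x + b, mem_image_of_mem _ hx, L y + b, mem_image_of_mem _ hy, hinj.ne hxy, ?_⟩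
  calc L x + b + (L y + b) = L (x + y) + (b + b) := by rw [map_add]; abel
    _ = L (∑ z ∈ S, z) + (k • b + k • b) := by rw [hsum, ZModModule.add_self, ZModModule.add_self]
    _ = ∑ z ∈ S.image fun x => L x + b, z := by
      rw [sum_image hinj.injOn, sum_add_distrib, map_sum, sum_const, hk, add_nsmul]

variable {n : ℕ} {ι : Type*} [Fintype ι] [DecidableEq ι] {a : ι → Fin n → ZMod 2}

lemma totalIsPairSum_image_sum_iff (hB : AffIndep (univ.image a)) (ha : a.Injective)
    {𝒮 : Finset (Finset ι)} (hodd : ∀ s ∈ 𝒮, Odd s.card)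
    (heven : Even (foldSymmDiff 𝒮).card) :
    TotalIsPairSum (𝒮.image fun s => ∑ i ∈ s, a i) ↔
      ∃ s ∈ 𝒮, ∃ t ∈ 𝒮, s ≠ t ∧ s ∆ t = foldSymmDiff 𝒮 := by
  have hinj : Set.InjOn (fun s => ∑ i ∈ s, a i) 𝒮 := (hB.injOn_sum_of_odd ha).mono hodd
  have htotal : ∑ x ∈ 𝒮.image fun s => ∑ i ∈ s, a i, x = ∑ i ∈ foldSymmDiff 𝒮, a i := by
    rw [sum_image hinj, ZModModule.sum_sum_eq_sum_foldSymmDiff]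
  have hpair : ∀ s ∈ 𝒮, ∀ t ∈ 𝒮, ∑ i ∈ s ∆ t, a i = ∑ i ∈ foldSymmDiff 𝒮, a i ↔
      s ∆ t = foldSymmDiff 𝒮 := fun s hs t ht =>
    ⟨hB.eq_of_sum_eq ha (((even_card_symmDiff_iff s t).mpr ((hodd s hs).add_odd (hodd t ht))).add
      heven), fun h => by rw [h]⟩
  simp only [TotalIsPairSum, htotal, mem_image, exists_exists_and_eq_and, ← ZModModule.sum_symmDiff]
  exact exists_congr fun s => and_congr_right fun hs => exists_congr fun t =>
    and_congr_right fun ht => and_congr (hinj.ne_iff hs ht) (hpair s hs t ht)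

end PairSum

def capIndexSets {ι : Type*} [Fintype ι] [DecidableEq ι] (p q : Finset ι) : Finset (Finset ι) :=
  univ.image ({·}) ∪ {p, q}

lemma coe_image_sum_capIndexSets {n : ℕ} {ι : Type*} [Fintype ι] [DecidableEq ι]
    (a : ι → Fin n → ZMod 2) (p q : Finset ι) :
    (((capIndexSets p q).image fun s => ∑ i ∈ s, a i : Finset _) : Set (Fin n → ZMod 2)) =
      ↑(univ.image a) ∪ {∑ i ∈ p, a i, ∑ i ∈ q, a i} := by
  simp [capIndexSets, image_image, Function.comp_def]

set_option maxRecDepth 10000 in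
theorem caps10_not_equivalent {n : ℕ} (a : Fin 8 → (Fin n → ZMod 2))
    (ha : Function.Injective a)
    (hB : AffIndep (Finset.image a Finset.univ)) :
    ¬ AffEquiv
      ((↑(Finset.image a Finset.univ) ∪
        {a 0 + a 1 + a 2 + a 3 + a 4, a 3 + a 4 + a 5 + a 6 + a 7}) :
          Set (Fin n → ZMod 2))
      ((↑(Finset.image a Finset.univ) ∪
        {a 0 + a 1 + a 2 + a 3 + a 4, a 2 + a 3 + a 4 + a 5 + a 6}) :
          Set (Fin n → ZMod 2)) := by
  rintro ⟨L, b, hLb⟩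
  set 𝒞 := capIndexSets ({0, 1, 2, 3, 4} : Finset (Fin 8)) {3, 4, 5, 6, 7}
  set 𝒞' := capIndexSets ({0, 1, 2, 3, 4} : Finset (Fin 8)) {2, 3, 4, 5, 6}
  have hodd : ∀ s ∈ 𝒞, Odd s.card := by decide
  have hodd' : ∀ s ∈ 𝒞', Odd s.card := by decide
  have himage : (𝒞.image fun s => ∑ i ∈ s, a i).image (fun x => L x + b) =
      𝒞'.image fun s => ∑ i ∈ s, a i := by
    apply coe_injective
    rw [coe_image, coe_image_sum_capIndexSets, coe_image_sum_capIndexSets]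
    simpa [add_assoc] using hLb
  have hcard : Even (𝒞.image fun s => ∑ i ∈ s, a i).card := by
    rw [card_image_of_injOn ((hB.injOn_sum_of_odd ha).mono hodd)]
    decide
  have hC : TotalIsPairSum (𝒞.image fun s => ∑ i ∈ s, a i) :=
    (totalIsPairSum_image_sum_iff hB ha hodd (by decide)).mpr (by decide)
  have hC' := hC.image_affine hcard L b
  rw [himage, totalIsPairSum_image_sum_iff hB ha hodd' (by decide)] at hC'
  revert hC'
  decide
end

section
/- Let B = {a₁, ..., a₈} be affinely independent in (Z/2Z)^n and let x₁ = a₁+a₂+a₃+a₄+a₅, x₂ = a₃+a₄+a₅+a₆+a₇, x₃ = a₁+a₃+a₄+a₆+a₈. Then C = B ∪ {x₁, x₂, x₃} is a cap of size 11. -/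
/-!
Write `g c = ∑ i, c i • a i` for `c ∈ (ZMod 2)^8`. Affine independence of the `a i` says exactly
that `g` kills no nonzero vector of even weight. The eleven points of `C` are the images under `g`
of eleven vectors of odd weight; a sum of two or of four odd-weight vectors has even weight, so `g`
is injective on them and a quad among the images would come from a quad among the vectors. It
remains to check by computation that these eleven vectors form a cap in `(ZMod 2)^8`.
-/

open Finset

namespace AffIndep

variable {n : ℕ}

theorem sum_ne_zero_s13 {B S : Finset (Fin n → ZMod 2)} (hB : AffIndep B) (hSB : S ⊆ B)
    (hS : S.Nonempty) (hev : Even S.card) : ∑ v ∈ S, v ≠ 0 := by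
  obtain ⟨b, hb⟩ := hS
  intro hsum
  refine hB b (hSB hb) (S.erase b) (erase_subset_erase b hSB) ?_ ?_
  · rw [card_erase_of_mem hb]
    exact Nat.Even.sub_odd (card_pos.2 ⟨b, hb⟩) hev odd_one
  · rw [← add_sum_erase S _ hb] at hsum
    exact eq_of_sub_eq_zero (by rwa [ZModModule.sub_eq_add])

theorem linearCombination_ne_zero_s13 {ι : Type*} [Fintype ι] {a : ι → Fin n → ZMod 2}
    (ha : Function.Injective a) (hB : AffIndep (univ.image a)) {c : ι → ZMod 2} (hc : c ≠ 0)
    (hpar : ∑ i, c i = 0) : Fintype.linearCombination (ZMod 2) a c ≠ 0 := by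
  classical
  set S := univ.filter (c · ≠ 0)
  have hcS : ∀ i ∈ S, c i = 1 := fun i hi => Fin.eq_one_of_ne_zero _ (mem_filter.1 hi).2
  have hlin : Fintype.linearCombination (ZMod 2) a c = ∑ v ∈ S.image a, v := by
    rw [Fintype.linearCombination_apply, sum_image ha.injOn,
      ← sum_filter_of_ne fun i _ h => left_ne_zero_of_smul h]
    exact sum_congr rfl fun i hi => by rw [hcS i hi, one_smul]
  have hcard : ((S.image a).card : ZMod 2) = ∑ i, c i := by
    rw [card_image_of_injective S ha, ← sum_filter_ne_zero, card_eq_sum_ones, Nat.cast_sum,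
      Nat.cast_one]
    exact sum_congr rfl fun i hi => (hcS i hi).symm
  rw [hlin]
  refine hB.sum_ne_zero_s13 (image_subset_image (subset_univ S)) ?_ ?_
  · obtain ⟨i, hi⟩ := Function.ne_iff.1 hc
    exact ⟨a i, mem_image_of_mem a (mem_filter.2 ⟨mem_univ i, hi⟩)⟩
  · rwa [← ZMod.natCast_eq_zero_iff_even, hcard]

end AffIndep

section OddWeight

variable {m n : ℕ} {g : (Fin m → ZMod 2) →ₗ[ZMod 2] (Fin n → ZMod 2)} {P : Set (Fin m → ZMod 2)}

theorem injOn_of_sum_eq_one (hg : ∀ c, c ≠ 0 → ∑ i, c i = 0 → g c ≠ 0)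
    (hP : ∀ p ∈ P, ∑ i, p i = 1) : Set.InjOn g P := by
  intro p hp q hq hpq
  by_contra hne
  refine hg (p + q) ?_ ?_ ?_
  · rwa [← ZModModule.sub_eq_add, sub_ne_zero]
  · simp only [Pi.add_apply, sum_add_distrib, hP p hp, hP q hq]
    decide
  · rw [map_add, hpq, ZModModule.add_self]

theorem IsCap.image_of_sum_eq_one (hg : ∀ c, c ≠ 0 → ∑ i, c i = 0 → g c ≠ 0)
    (hP : ∀ p ∈ P, ∑ i, p i = 1) (hcap : IsCap P) : IsCap (g '' P) := by
  rintro _ ⟨p, hp, rfl⟩ _ ⟨q, hq, rfl⟩ _ ⟨r, hr, rfl⟩ _ ⟨s, hs, rfl⟩ hpq hpr hps hqr hqs hrs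
  have hsum : ∑ i, (p + q + r + s) i = 0 := by
    simp only [Pi.add_apply, sum_add_distrib, hP p hp, hP q hq, hP r hr, hP s hs]
    decide
  simpa only [map_add] using hg (p + q + r + s) (hcap p hp q hq r hr s hs
    (ne_of_apply_ne g hpq) (ne_of_apply_ne g hpr) (ne_of_apply_ne g hps) (ne_of_apply_ne g hqr)
    (ne_of_apply_ne g hqs) (ne_of_apply_ne g hrs)) hsum

end OddWeight

theorem isCap_range {m : ℕ} {ι : Type*} {v : ι → Fin m → ZMod 2}
    (hv : ∀ i j k l, i ≠ j → i ≠ k → i ≠ l → j ≠ k → j ≠ l → k ≠ l →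
      v i + v j + v k + v l ≠ 0) :
    IsCap (Set.range v) := by
  rintro _ ⟨i, rfl⟩ _ ⟨j, rfl⟩ _ ⟨k, rfl⟩ _ ⟨l, rfl⟩ hij hik hil hjk hjl hkl
  exact hv i j k l (ne_of_apply_ne v hij) (ne_of_apply_ne v hik) (ne_of_apply_ne v hil)
    (ne_of_apply_ne v hjk) (ne_of_apply_ne v hjl) (ne_of_apply_ne v hkl)

def modelCap : Fin 11 → Fin 8 → ZMod 2 :=
  ![![1, 0, 0, 0, 0, 0, 0, 0], ![0, 1, 0, 0, 0, 0, 0, 0], ![0, 0, 1, 0, 0, 0, 0, 0],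
    ![0, 0, 0, 1, 0, 0, 0, 0], ![0, 0, 0, 0, 1, 0, 0, 0], ![0, 0, 0, 0, 0, 1, 0, 0],
    ![0, 0, 0, 0, 0, 0, 1, 0], ![0, 0, 0, 0, 0, 0, 0, 1], ![1, 1, 1, 1, 1, 0, 0, 0],
    ![0, 0, 1, 1, 1, 1, 1, 0], ![1, 0, 1, 1, 0, 1, 0, 1]]

theorem modelCap_injective : Function.Injective modelCap := by
  unfold Function.Injective
  decide

theorem sum_modelCap (i : Fin 11) : ∑ k, modelCap i k = 1 := by
  revert i
  decide

theorem isCap_range_modelCap : IsCap (Set.range modelCap) :=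
  isCap_range (by decide +kernel)

theorem cap11_555_333 {n : ℕ} (a : Fin 8 → (Fin n → ZMod 2))
    (ha : Function.Injective a)
    (hB : AffIndep (Finset.image a Finset.univ)) :
    IsCap (↑(Finset.image a Finset.univ ∪
        {a 0 + a 1 + a 2 + a 3 + a 4,
         a 2 + a 3 + a 4 + a 5 + a 6,
         a 0 + a 2 + a 3 + a 5 + a 7}) : Set (Fin n → ZMod 2)) ∧
    (Finset.image a Finset.univ ∪
        {a 0 + a 1 + a 2 + a 3 + a 4,
         a 2 + a 3 + a 4 + a 5 + a 6,
         a 0 + a 2 + a 3 + a 5 + a 7}).card = 11 := by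
  set g := Fintype.linearCombination (ZMod 2) a
  have hg : ∀ c, c ≠ 0 → ∑ i, c i = 0 → g c ≠ 0 := fun c => hB.linearCombination_ne_zero_s13 ha
  have hodd : ∀ p ∈ Set.range modelCap, ∑ i, p i = 1 := Set.forall_mem_range.2 sum_modelCap
  have hC : Finset.image a Finset.univ ∪
      {a 0 + a 1 + a 2 + a 3 + a 4, a 2 + a 3 + a 4 + a 5 + a 6, a 0 + a 2 + a 3 + a 5 + a 7} =
      univ.image (g ∘ modelCap) := by
    ext x
    simp only [mem_union, mem_image, mem_univ, true_and, mem_insert, mem_singleton,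
      Fin.exists_fin_succ, IsEmpty.exists_iff, or_false, or_assoc, Function.comp_apply]
    simp [g, Fintype.linearCombination_apply, Fin.sum_univ_eight, modelCap, eq_comm (b := x)]
  rw [hC, coe_image, coe_univ, Set.image_univ, Set.range_comp, card_image_of_injective _
    (((injOn_of_sum_eq_one hg hodd).injective_iff _ subset_rfl).2 modelCap_injective)]
  exact ⟨isCap_range_modelCap.image_of_sum_eq_one hg hodd, card_fin 11⟩
end

section
/- (Forbidden triples) Let C be a cap in (Z/2Z)^n with affinely independent subset B of size 8 and dependent set {x₁, x₂, x₃} with x_i = Σ B_i and |B_i| = 5 for each i. Then at most one of the three intersection numbers |B₁ ∩ B₂|, |B₁ ∩ B₃|, |B₂ ∩ B₃| equals 2. -/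
/-! If `|B₁ ∩ B₂| = |B₁ ∩ B₃| = 2`, inclusion–exclusion inside the 8-set `B` forces
`|B₂ ∩ B₃| ≥ 3 + |B₁ ∩ B₂ ∩ B₃|`. The value 5 would make `x₂ = x₃`, and the value 4 would make
`B₂ ∆ B₃ = {b, b'}` and `{x₂, x₃, b, b'}` a quad. Hence `|B₂ ∩ B₃| = 3` and the three sets have
no common element, so `B₁ ∆ B₂ ∆ B₃` is a single point `b`, and `{x₁, x₂, x₃, b}` is a quad. -/

open Finset
open scoped symmDiff

section Counting

variable {α : Type*} [DecidableEq α]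

lemma Finset.symmDiff_eq_union_sdiff_inter (s t : Finset α) : s ∆ t = (s ∪ t) \ (s ∩ t) :=
  symmDiff_eq_sup_sdiff_inf s t

lemma Finset.card_symmDiff_add_two_mul_card_inter (s t : Finset α) :
    #(s ∆ t) + 2 * #(s ∩ t) = #s + #t := by
  have hsub := card_sdiff_add_card_eq_card (inter_subset_union (s := s) (t := t))
  rw [← symmDiff_eq_union_sdiff_inter] at hsub
  have := card_union_add_card_inter s t
  omega

lemma Finset.card_symmDiff_symmDiff (s t u : Finset α) :
    #(s ∆ t ∆ u) + 2 * (#(s ∩ t) + #(s ∩ u) + #(t ∩ u)) = #s + #t + #u + 4 * #(s ∩ t ∩ u) := by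
  have hst := card_symmDiff_add_two_mul_card_inter s t
  have hstu := card_symmDiff_add_two_mul_card_inter (s ∆ t) u
  have hsu_tu := card_symmDiff_add_two_mul_card_inter (s ∩ u) (t ∩ u)
  rw [show s ∆ t ∩ u = (s ∩ u) ∆ (t ∩ u) from inf_symmDiff_distrib_right s t u] at hstu
  rw [← inter_inter_distrib_right] at hsu_tu
  omega

lemma Finset.card_union_union_add_card_inter (s t u : Finset α) :
    #(s ∪ t ∪ u) + (#(s ∩ t) + #(s ∩ u) + #(t ∩ u)) = #s + #t + #u + #(s ∩ t ∩ u) := by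
  have hst := card_union_add_card_inter s t
  have hstu := card_union_add_card_inter (s ∪ t) u
  have hsu_tu := card_union_add_card_inter (s ∩ u) (t ∩ u)
  rw [union_inter_distrib_right] at hstu
  rw [← inter_inter_distrib_right] at hsu_tu
  omega

lemma Finset.not_card_inter_eq_two_and_eq_two {A₁ A₂ A₃ : Finset α}
    (hunion : #(A₁ ∪ A₂ ∪ A₃) ≤ 8) (hc₁ : #A₁ = 5) (hc₂ : #A₂ = 5) (hc₃ : #A₃ = 5)
    (hne : A₂ ≠ A₃) (h₂₃ : #(A₂ ∆ A₃) ≠ 2) (h₁₂₃ : #(A₁ ∆ A₂ ∆ A₃) ≠ 1) :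
    ¬(#(A₁ ∩ A₂) = 2 ∧ #(A₁ ∩ A₃) = 2) := by
  rintro ⟨h₁₂, h₁₃⟩
  have hpos : 0 < #(A₂ ∆ A₃) := (symmDiff_nonempty.2 hne).card_pos
  have := card_union_union_add_card_inter A₁ A₂ A₃
  have := card_symmDiff_add_two_mul_card_inter A₂ A₃
  have := card_symmDiff_symmDiff A₁ A₂ A₃
  omega

end Counting

lemma Finset.sum_symmDiff_eq_add {α G : Type*} [DecidableEq α] [AddCommGroup G]
    [Module (ZMod 2) G] (s t : Finset α) (f : α → G) :
    ∑ i ∈ s ∆ t, f i = ∑ i ∈ s, f i + ∑ i ∈ t, f i := by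
  have h := sum_sdiff (f := f) (inter_subset_union (s := s) (t := t))
  rw [← symmDiff_eq_union_sdiff_inter] at h
  rw [← sum_union_inter, ← h, add_assoc, ZModModule.add_self, add_zero]

namespace IsCap

variable {n : ℕ} {C : Set (Fin n → ZMod 2)} {B : Finset (Fin n → ZMod 2)}
  {y₁ y₂ y₃ : Fin n → ZMod 2} {A₁ A₂ A₃ : Finset (Fin n → ZMod 2)}

lemma card_symmDiff_ne_two (hC : IsCap C) (hBC : ↑B ⊆ C)
    (hy₁C : y₁ ∈ C) (hy₁B : y₁ ∉ B) (hy₂C : y₂ ∈ C) (hy₂B : y₂ ∉ B) (h₁₂ : y₁ ≠ y₂)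
    (hA₁ : A₁ ⊆ B) (hA₂ : A₂ ⊆ B) (hy₁ : y₁ = ∑ v ∈ A₁, v) (hy₂ : y₂ = ∑ v ∈ A₂, v) :
    #(A₁ ∆ A₂) ≠ 2 := by
  intro hcard
  obtain ⟨b, b', hbb', hpair⟩ := card_eq_two.mp hcard
  have hsub : A₁ ∆ A₂ ⊆ B := symmDiff_subset_union.trans (union_subset hA₁ hA₂)
  have hb : b ∈ B := hsub (by simp [hpair])
  have hb' : b' ∈ B := hsub (by simp [hpair])
  have hsum : y₁ + y₂ = b + b' := by
    rw [hy₁, hy₂, ← sum_symmDiff_eq_add, hpair, sum_pair hbb']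
  refine hC y₁ hy₁C y₂ hy₂C b (hBC hb) b' (hBC hb') h₁₂ (ne_of_mem_of_not_mem hb hy₁B).symm
    (ne_of_mem_of_not_mem hb' hy₁B).symm (ne_of_mem_of_not_mem hb hy₂B).symm
    (ne_of_mem_of_not_mem hb' hy₂B).symm hbb' ?_
  rw [add_assoc, hsum, ZModModule.add_self]

lemma card_symmDiff_symmDiff_ne_one (hC : IsCap C) (hBC : ↑B ⊆ C)
    (hy₁C : y₁ ∈ C) (hy₁B : y₁ ∉ B) (hy₂C : y₂ ∈ C) (hy₂B : y₂ ∉ B)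
    (hy₃C : y₃ ∈ C) (hy₃B : y₃ ∉ B) (h₁₂ : y₁ ≠ y₂) (h₁₃ : y₁ ≠ y₃) (h₂₃ : y₂ ≠ y₃)
    (hA₁ : A₁ ⊆ B) (hA₂ : A₂ ⊆ B) (hA₃ : A₃ ⊆ B)
    (hy₁ : y₁ = ∑ v ∈ A₁, v) (hy₂ : y₂ = ∑ v ∈ A₂, v) (hy₃ : y₃ = ∑ v ∈ A₃, v) :
    #(A₁ ∆ A₂ ∆ A₃) ≠ 1 := by
  intro hcard
  obtain ⟨b, hsingle⟩ := card_eq_one.mp hcard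
  have hsub : A₁ ∆ A₂ ∆ A₃ ⊆ B := symmDiff_subset_union.trans
    (union_subset (symmDiff_subset_union.trans (union_subset hA₁ hA₂)) hA₃)
  have hb : b ∈ B := hsub (by simp [hsingle])
  have hsum : y₁ + y₂ + y₃ = b := by
    rw [hy₁, hy₂, hy₃, ← sum_symmDiff_eq_add, ← sum_symmDiff_eq_add, hsingle, sum_singleton]
  refine hC y₁ hy₁C y₂ hy₂C y₃ hy₃C b (hBC hb) h₁₂ h₁₃ (ne_of_mem_of_not_mem hb hy₁B).symm h₂₃
    (ne_of_mem_of_not_mem hb hy₂B).symm (ne_of_mem_of_not_mem hb hy₃B).symm ?_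
  rw [hsum, ZModModule.add_self]

lemma not_card_inter_eq_two_and_eq_two (hC : IsCap C) (hBC : ↑B ⊆ C) (hB : #B ≤ 8)
    (hy₁C : y₁ ∈ C) (hy₁B : y₁ ∉ B) (hy₂C : y₂ ∈ C) (hy₂B : y₂ ∉ B)
    (hy₃C : y₃ ∈ C) (hy₃B : y₃ ∉ B) (h₁₂ : y₁ ≠ y₂) (h₁₃ : y₁ ≠ y₃) (h₂₃ : y₂ ≠ y₃)
    (hA₁ : A₁ ⊆ B) (hA₂ : A₂ ⊆ B) (hA₃ : A₃ ⊆ B)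
    (hy₁ : y₁ = ∑ v ∈ A₁, v) (hy₂ : y₂ = ∑ v ∈ A₂, v) (hy₃ : y₃ = ∑ v ∈ A₃, v)
    (hc₁ : #A₁ = 5) (hc₂ : #A₂ = 5) (hc₃ : #A₃ = 5) :
    ¬(#(A₁ ∩ A₂) = 2 ∧ #(A₁ ∩ A₃) = 2) :=
  Finset.not_card_inter_eq_two_and_eq_two
    ((card_le_card (union_subset (union_subset hA₁ hA₂) hA₃)).trans hB) hc₁ hc₂ hc₃
    (fun h => h₂₃ (by rw [hy₂, hy₃, h]))
    (hC.card_symmDiff_ne_two hBC hy₂C hy₂B hy₃C hy₃B h₂₃ hA₂ hA₃ hy₂ hy₃)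
    (hC.card_symmDiff_symmDiff_ne_one hBC hy₁C hy₁B hy₂C hy₂B hy₃C hy₃B h₁₂ h₁₃ h₂₃
      hA₁ hA₂ hA₃ hy₁ hy₂ hy₃)

end IsCap

theorem forbidden_triples_general {n : ℕ} (C : Set (Fin n → ZMod 2))
    (hC : IsCap C) (B B₁ B₂ B₃ : Finset (Fin n → ZMod 2)) (hBC : ↑B ⊆ C)
    (hBcard : B.card = 8)
    (x₁ x₂ x₃ : Fin n → ZMod 2)
    (hx₁C : x₁ ∈ C) (hx₁B : x₁ ∉ B)
    (hx₂C : x₂ ∈ C) (hx₂B : x₂ ∉ B)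
    (hx₃C : x₃ ∈ C) (hx₃B : x₃ ∉ B)
    (h12 : x₁ ≠ x₂) (h13 : x₁ ≠ x₃) (h23 : x₂ ≠ x₃)
    (hs₁ : B₁ ⊆ B) (hs₂ : B₂ ⊆ B) (hs₃ : B₃ ⊆ B)
    (he₁ : x₁ = ∑ v ∈ B₁, v) (he₂ : x₂ = ∑ v ∈ B₂, v) (he₃ : x₃ = ∑ v ∈ B₃, v)
    (hc₁ : B₁.card = 5) (hc₂ : B₂.card = 5) (hc₃ : B₃.card = 5) :
    ¬((B₁ ∩ B₂).card = 2 ∧ (B₁ ∩ B₃).card = 2) ∧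
    ¬((B₁ ∩ B₂).card = 2 ∧ (B₂ ∩ B₃).card = 2) ∧
    ¬((B₁ ∩ B₃).card = 2 ∧ (B₂ ∩ B₃).card = 2) := by
  refine ⟨?_, ?_, ?_⟩
  · exact hC.not_card_inter_eq_two_and_eq_two hBC hBcard.le hx₁C hx₁B hx₂C hx₂B hx₃C hx₃B
      h12 h13 h23 hs₁ hs₂ hs₃ he₁ he₂ he₃ hc₁ hc₂ hc₃
  · rw [inter_comm B₁ B₂]
    exact hC.not_card_inter_eq_two_and_eq_two hBC hBcard.le hx₂C hx₂B hx₁C hx₁B hx₃C hx₃B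
      h12.symm h23 h13 hs₂ hs₁ hs₃ he₂ he₁ he₃ hc₂ hc₁ hc₃
  · rw [inter_comm B₁ B₃, inter_comm B₂ B₃]
    exact hC.not_card_inter_eq_two_and_eq_two hBC hBcard.le hx₃C hx₃B hx₁C hx₁B hx₂C hx₂B
      h13.symm h23.symm h12 hs₃ hs₁ hs₂ he₃ he₁ he₂ hc₃ hc₁ hc₂

theorem forbidden_triples {n : ℕ} (C : Set (Fin n → ZMod 2))
    (hC : IsCap C) (B B₁ B₂ B₃ : Finset (Fin n → ZMod 2)) (hBC : ↑B ⊆ C)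
    (hB : AffIndep B) (hBcard : B.card = 8)
    (x₁ x₂ x₃ : Fin n → ZMod 2)
    (hx₁C : x₁ ∈ C) (hx₁B : x₁ ∉ B)
    (hx₂C : x₂ ∈ C) (hx₂B : x₂ ∉ B)
    (hx₃C : x₃ ∈ C) (hx₃B : x₃ ∉ B)
    (h12 : x₁ ≠ x₂) (h13 : x₁ ≠ x₃) (h23 : x₂ ≠ x₃)
    (hs₁ : B₁ ⊆ B) (hs₂ : B₂ ⊆ B) (hs₃ : B₃ ⊆ B)
    (he₁ : x₁ = ∑ v ∈ B₁, v) (he₂ : x₂ = ∑ v ∈ B₂, v) (he₃ : x₃ = ∑ v ∈ B₃, v)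
    (hc₁ : B₁.card = 5) (hc₂ : B₂.card = 5) (hc₃ : B₃.card = 5) :
    ¬((B₁ ∩ B₂).card = 2 ∧ (B₁ ∩ B₃).card = 2) ∧
    ¬((B₁ ∩ B₂).card = 2 ∧ (B₂ ∩ B₃).card = 2) ∧
    ¬((B₁ ∩ B₃).card = 2 ∧ (B₂ ∩ B₃).card = 2) :=
  forbidden_triples_general C hC B B₁ B₂ B₃ hBC hBcard x₁ x₂ x₃ hx₁C hx₁B hx₂C hx₂B hx₃C hx₃B h12
    h13 h23 hs₁ hs₂ hs₃ he₁ he₂ he₃ hc₁ hc₂ hc₃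
end
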